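/- Let ζ : ℕ → ℂ with ζ(n) ≠ 0 for all n and #{n : |ζ(n)| ≤ r} ≤ C(1+r²) for all r ≥ 0, let P(s) = ∏_n (1 − s/ζ(n))·exp(s/ζ(n) + s²/(2ζ(n)²)), and let δ > 0, c > 0. Then there exists C′ > 0 such that for every s ∈ ℂ satisfying |s − ζ(n)| ≥ c·⟨s⟩^{−2−δ} for all n, where ⟨s⟩ = (1+|s|²)^{1/2}, one has |P′(s)/P(s)| ≤ C′·⟨s⟩^{4+δ}. -/

import Mathlib

/-!
`P'/P` is the sum of the logarithmic derivatives `s² / (ζ² (s - ζ))` of the genus-two factors; the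
product converges locally uniformly because `E₂(z) - 1 = O(|z|³)` and `∑ |ζ n|⁻³ < ∞`. Split the
sum at `|ζ| = 2⟨s⟩`: there are `O(⟨s⟩²)` near terms, each `O(⟨s⟩^{2+δ})` by the separation
hypothesis, and the far terms are `O(⟨s⟩² |ζ|⁻³)`, whose sum is `O(⟨s⟩²)` by a dyadic count.
-/

open Complex Filter Metric

noncomputable def weierstrassE2 (z : ℂ) : ℂ := (1 - z) * exp (z + z ^ 2 / 2)

lemma weierstrassE2_div (a s : ℂ) :
    weierstrassE2 (s / a) = (1 - s / a) * exp (s / a + s ^ 2 / (2 * a ^ 2)) := by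
  rw [weierstrassE2, div_pow, div_div, mul_comm (a ^ 2)]

lemma weierstrassE2_ne_zero {z : ℂ} (hz : z ≠ 1) : weierstrassE2 z ≠ 0 :=
  mul_ne_zero (sub_ne_zero.2 hz.symm) (exp_ne_zero _)

lemma hasDerivAt_weierstrassE2 (z : ℂ) :
    HasDerivAt weierstrassE2 (-z ^ 2 * exp (z + z ^ 2 / 2)) z := by
  have h1 : HasDerivAt (fun w : ℂ => 1 - w) (-1) z := by
    simpa using (hasDerivAt_id z).const_sub 1
  have h2 : HasDerivAt (fun w : ℂ => w + w ^ 2 / 2) (1 + z) z := by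
    simpa using (hasDerivAt_id z).fun_add ((hasDerivAt_pow 2 z).div_const 2)
  exact (h1.fun_mul h2.cexp).congr_deriv (by ring)

lemma differentiable_weierstrassE2 : Differentiable ℂ weierstrassE2 :=
  fun z => (hasDerivAt_weierstrassE2 z).differentiableAt

lemma logDeriv_weierstrassE2_div {a s : ℂ} (ha : a ≠ 0) (hs : s ≠ a) :
    logDeriv (fun w => weierstrassE2 (w / a)) s = s ^ 2 / (a ^ 2 * (s - a)) := by
  have h := (hasDerivAt_weierstrassE2 (s / a)).comp s ((hasDerivAt_id s).div_const a)
  have hsa : s - a ≠ 0 := sub_ne_zero.2 hs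
  rw [logDeriv_apply, show (fun w => weierstrassE2 (w / a)) = weierstrassE2 ∘ fun w => id w / a
    from rfl, h.deriv]
  simp only [weierstrassE2]
  field_simp
  ring

lemma norm_log_one_sub_add_le {z : ℂ} (hz : ‖z‖ ≤ 1 / 2) :
    ‖log (1 - z) + z + z ^ 2 / 2‖ ≤ ‖z‖ ^ 3 := by
  have h := norm_log_sub_logTaylor_le 2 (z := -z) (by rw [norm_neg]; linarith)
  have hT : logTaylor (2 + 1) (-z) = -z - z ^ 2 / 2 := by
    simp only [logTaylor, Finset.sum_range_succ, Finset.sum_range_zero]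
    norm_num
    ring
  rw [show (1 : ℂ) + -z = 1 - z by ring, hT, norm_neg] at h
  have h2 : (1 - ‖z‖)⁻¹ ≤ 2 := by
    rw [inv_le_comm₀ (by linarith) (by norm_num)]
    linarith
  calc ‖log (1 - z) + z + z ^ 2 / 2‖ = ‖log (1 - z) - (-z - z ^ 2 / 2)‖ := by ring_nf
    _ ≤ ‖z‖ ^ 3 * (1 - ‖z‖)⁻¹ / 3 := by norm_num at h; exact h
    _ ≤ ‖z‖ ^ 3 * 2 / 3 := by gcongr
    _ ≤ ‖z‖ ^ 3 := by linarith [pow_nonneg (norm_nonneg z) 3]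

lemma norm_weierstrassE2_sub_one_le {z : ℂ} (hz : ‖z‖ ≤ 1 / 2) :
    ‖weierstrassE2 z - 1‖ ≤ 2 * ‖z‖ ^ 3 := by
  have hL := norm_log_one_sub_add_le hz
  have h1z : 1 - z ≠ 0 := sub_ne_zero.2 fun h => by norm_num [← h] at hz
  have hE : weierstrassE2 z = exp (log (1 - z) + z + z ^ 2 / 2) := by
    rw [add_assoc, exp_add, exp_log h1z, weierstrassE2]
  have hz3 : ‖z‖ ^ 3 ≤ 1 := pow_le_one₀ (norm_nonneg z) (by linarith)
  rw [hE]
  exact (norm_exp_sub_one_le (hL.trans hz3)).trans (by gcongr)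

lemma sq_div_sq_mul_sub_eq {a s : ℂ} (ha : a ≠ 0) (hs : s ≠ a) :
    s ^ 2 / (a ^ 2 * (s - a)) = (s - a)⁻¹ + a⁻¹ + s / a ^ 2 := by
  have hsa : s - a ≠ 0 := sub_ne_zero.2 hs
  field_simp
  ring

lemma norm_sq_div_sq_mul_sub_le {a s : ℂ} (ha : a ≠ 0) (hs : s ≠ a) :
    ‖s ^ 2 / (a ^ 2 * (s - a))‖ ≤ ‖s - a‖⁻¹ + ‖a‖⁻¹ + ‖s‖ * ‖a‖⁻¹ ^ 2 := by
  rw [sq_div_sq_mul_sub_eq ha hs]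
  refine (norm_add₃_le ..).trans_eq ?_
  rw [norm_inv, norm_inv, norm_div, norm_pow, div_eq_mul_inv, inv_pow]

lemma norm_sq_div_sq_mul_sub_le_of_two_mul_le {a s : ℂ} (h : 2 * ‖s‖ ≤ ‖a‖) :
    ‖s ^ 2 / (a ^ 2 * (s - a))‖ ≤ 2 * ‖s‖ ^ 2 * ‖a‖⁻¹ ^ 3 := by
  rcases eq_or_ne a 0 with rfl | ha
  · simp
  have hsa : ‖a‖ / 2 ≤ ‖s - a‖ := by
    linarith [norm_sub_norm_le a s, norm_sub_rev a s]
  have ha' : 0 < ‖a‖ := norm_pos_iff.2 ha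
  rw [norm_div, norm_mul, norm_pow, norm_pow]
  calc ‖s‖ ^ 2 / (‖a‖ ^ 2 * ‖s - a‖) ≤ ‖s‖ ^ 2 / (‖a‖ ^ 2 * (‖a‖ / 2)) := by gcongr
    _ = 2 * ‖s‖ ^ 2 * ‖a‖⁻¹ ^ 3 := by field_simp

lemma two_pow_log_floor_le {r : ℝ} (hr : 1 ≤ r) :
    (2 : ℝ) ^ Nat.log 2 ⌊r⌋₊ ≤ r ∧ r < 2 * 2 ^ Nat.log 2 ⌊r⌋₊ := by
  have hfloor : ⌊r⌋₊ ≠ 0 := (Nat.floor_pos.2 hr).ne'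
  constructor
  · calc (2 : ℝ) ^ Nat.log 2 ⌊r⌋₊ ≤ ⌊r⌋₊ := by exact_mod_cast Nat.pow_log_le_self 2 hfloor
      _ ≤ r := Nat.floor_le (zero_le_one.trans hr)
  · calc r < ⌊r⌋₊ + 1 := Nat.lt_floor_add_one r
      _ ≤ 2 * 2 ^ Nat.log 2 ⌊r⌋₊ := by
        rw [← pow_succ']
        exact_mod_cast Nat.lt_pow_succ_log_self one_lt_two _

def HasQuadraticCounting {ι : Type*} (ζ : ι → ℂ) (C : ℝ) : Prop :=
  ∀ r : ℝ, 0 ≤ r → {n | ‖ζ n‖ ≤ r}.Finite ∧ ({n | ‖ζ n‖ ≤ r}.ncard : ℝ) ≤ C * (1 + r ^ 2)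

namespace HasQuadraticCounting

variable {ι : Type*} {ζ : ι → ℂ} {C : ℝ}

lemma nonneg (h : HasQuadraticCounting ζ C) : 0 ≤ C := by
  simpa using (Nat.cast_nonneg _).trans (h 0 le_rfl).2

lemma card_le (h : HasQuadraticCounting ζ C) {r : ℝ} (hr : 0 ≤ r) (v : Finset ι)
    (hv : ∀ n ∈ v, ‖ζ n‖ ≤ r) : (v.card : ℝ) ≤ C * (1 + r ^ 2) := by
  have hsub : (v : Set ι) ⊆ {n | ‖ζ n‖ ≤ r} := hv
  calc (v.card : ℝ) = (v : Set ι).ncard := by rw [Set.ncard_coe_finset]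
    _ ≤ {n | ‖ζ n‖ ≤ r}.ncard := by exact_mod_cast Set.ncard_le_ncard hsub (h r hr).1
    _ ≤ C * (1 + r ^ 2) := (h r hr).2

lemma eventually_lt_norm (h : HasQuadraticCounting ζ C) (r : ℝ) :
    ∀ᶠ n in cofinite, r < ‖ζ n‖ := by
  filter_upwards [(h (max r 0) (le_max_right r 0)).1.eventually_cofinite_notMem] with n hn
  exact (le_max_left r 0).trans_lt (not_le.1 hn)

lemma exists_norm_inv_le (h : HasQuadraticCounting ζ C) : ∃ M, 0 ≤ M ∧ ∀ n, ‖ζ n‖⁻¹ ≤ M := by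
  obtain ⟨M, hM⟩ := ((h 1 zero_le_one).1.image fun n => ‖ζ n‖⁻¹).bddAbove
  refine ⟨max 1 M, zero_le_one.trans (le_max_left _ _), fun n => ?_⟩
  rcases le_or_gt ‖ζ n‖ 1 with hn | hn
  · exact (hM ⟨n, hn, rfl⟩).trans (le_max_right _ _)
  · exact (inv_le_one_of_one_le₀ hn.le).trans (le_max_left _ _)

/-- Dyadic decomposition: at most `5C·4^j` of the points have `2^j ≤ ‖ζ n‖ < 2^(j+1)`, and each
contributes at most `8^(-j)`. -/
lemma sum_norm_inv_pow_three_le (h : HasQuadraticCounting ζ C) (u : Finset ι)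
    (hu : ∀ n ∈ u, 1 ≤ ‖ζ n‖) : ∑ n ∈ u, ‖ζ n‖⁻¹ ^ 3 ≤ 10 * C := by
  classical
  set k : ι → ℕ := fun n => Nat.log 2 ⌊‖ζ n‖⌋₊
  have hk : ∀ n ∈ u, (2 : ℝ) ^ k n ≤ ‖ζ n‖ ∧ ‖ζ n‖ < 2 * 2 ^ k n := fun n hn =>
    two_pow_log_floor_le (hu n hn)
  have hfiber : ∀ j, ∑ n ∈ u with k n = j, ‖ζ n‖⁻¹ ^ 3 ≤ 5 * C * (1 / 2) ^ j := by
    intro j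
    set x : ℝ := 2 ^ j
    have hx : 1 ≤ x := one_le_pow₀ one_le_two
    have hterm : ∀ n ∈ u.filter (k · = j), ‖ζ n‖⁻¹ ^ 3 ≤ x⁻¹ ^ 3 := by
      intro n hn
      obtain ⟨hnu, rfl⟩ := Finset.mem_filter.1 hn
      gcongr
      exact (hk n hnu).1
    have hcard : ((u.filter (k · = j)).card : ℝ) ≤ C * (1 + (2 * x) ^ 2) := by
      refine h.card_le (by positivity) _ fun n hn => ?_
      obtain ⟨hnu, rfl⟩ := Finset.mem_filter.1 hn
      exact (hk n hnu).2.le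
    calc ∑ n ∈ u with k n = j, ‖ζ n‖⁻¹ ^ 3
        ≤ (u.filter (k · = j)).card * x⁻¹ ^ 3 := by
          simpa using Finset.sum_le_card_nsmul _ _ _ hterm
      _ ≤ C * (1 + (2 * x) ^ 2) * x⁻¹ ^ 3 := by gcongr
      _ ≤ C * (5 * x ^ 2) * x⁻¹ ^ 3 := by
          gcongr ?_ * _
          exact mul_le_mul_of_nonneg_left (by nlinarith) h.nonneg
      _ = 5 * C * x⁻¹ := by field_simp
      _ = 5 * C * (1 / 2) ^ j := by rw [one_div_pow, one_div]
  have hgeom : ∑ j ∈ u.image k, (1 / 2 : ℝ) ^ j ≤ 2 :=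
    (summable_geometric_two.sum_le_tsum _ fun _ _ => by positivity).trans_eq tsum_geometric_two
  calc ∑ n ∈ u, ‖ζ n‖⁻¹ ^ 3
      = ∑ j ∈ u.image k, ∑ n ∈ u with k n = j, ‖ζ n‖⁻¹ ^ 3 :=
        (Finset.sum_fiberwise_of_maps_to (fun n hn => Finset.mem_image_of_mem k hn) _).symm
    _ ≤ ∑ j ∈ u.image k, 5 * C * (1 / 2) ^ j := Finset.sum_le_sum fun j _ => hfiber j
    _ ≤ 5 * C * 2 := by rw [← Finset.mul_sum]; gcongr; linarith [h.nonneg]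
    _ = 10 * C := by ring

lemma tsum_norm_inv_pow_three_le (h : HasQuadraticCounting ζ C) {s : Set ι}
    (hs : ∀ n ∈ s, 1 ≤ ‖ζ n‖) :
    Summable (fun n : s => ‖ζ n‖⁻¹ ^ 3) ∧ ∑' n : s, ‖ζ n‖⁻¹ ^ 3 ≤ 10 * C := by
  have hsum (v : Finset s) : ∑ n ∈ v, ‖ζ n‖⁻¹ ^ 3 ≤ 10 * C := by
    refine (Finset.sum_map v (.subtype _) fun n => ‖ζ n‖⁻¹ ^ 3).symm.trans_le
      (h.sum_norm_inv_pow_three_le _ fun n hn => ?_)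
    obtain ⟨n, -, rfl⟩ := Finset.mem_map.1 hn
    exact hs n n.2
  have hsummable := summable_of_sum_le (fun _ => by positivity) hsum
  exact ⟨hsummable, hsummable.tsum_le_of_sum_le hsum⟩

lemma summable_norm_inv_pow_three (h : HasQuadraticCounting ζ C) :
    Summable fun n => ‖ζ n‖⁻¹ ^ 3 := by
  have hfin : ({n | 1 ≤ ‖ζ n‖}ᶜ : Set ι).Finite :=
    (h 1 zero_le_one).1.subset fun n (hn : ¬1 ≤ ‖ζ n‖) => (not_le.1 hn).le
  have := hfin.to_subtype
  exact (summable_subtype_and_compl (s := {n | 1 ≤ ‖ζ n‖})).1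
    ⟨(h.tsum_norm_inv_pow_three_le fun _ hn => hn).1, .of_finite⟩

lemma summable_sq_div_sq_mul_sub (h : HasQuadraticCounting ζ C) (s : ℂ) :
    Summable fun n => s ^ 2 / (ζ n ^ 2 * (s - ζ n)) :=
  (h.summable_norm_inv_pow_three.mul_left (2 * ‖s‖ ^ 2)).of_norm_bounded_eventually <| by
    filter_upwards [h.eventually_lt_norm (2 * ‖s‖)] with n hn
      using norm_sq_div_sq_mul_sub_le_of_two_mul_le hn.le

lemma norm_tsum_sq_div_sq_mul_sub_le (h : HasQuadraticCounting ζ C) (hζ : ∀ n, ζ n ≠ 0)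
    {M ε ρ : ℝ} (hM0 : 0 ≤ M) (hM : ∀ n, ‖ζ n‖⁻¹ ≤ M) (hε : 0 < ε) {s : ℂ}
    (hs : ∀ n, ε ≤ ‖s - ζ n‖) (hρ : 1 ≤ ρ) (hsρ : 2 * ‖s‖ ≤ ρ) :
    ‖∑' n, s ^ 2 / (ζ n ^ 2 * (s - ζ n))‖ ≤
      C * (1 + ρ ^ 2) * (ε⁻¹ + M + ‖s‖ * M ^ 2) + 20 * C * ‖s‖ ^ 2 := by
  set t : ι → ℂ := fun n => s ^ 2 / (ζ n ^ 2 * (s - ζ n))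
  set T : Finset ι := (h ρ (by linarith)).1.toFinset
  have hT : ∀ n, n ∈ T ↔ ‖ζ n‖ ≤ ρ := fun n => Set.Finite.mem_toFinset _
  have hnear : ∑ n ∈ T, ‖t n‖ ≤ C * (1 + ρ ^ 2) * (ε⁻¹ + M + ‖s‖ * M ^ 2) := by
    have hterm : ∀ n ∈ T, ‖t n‖ ≤ ε⁻¹ + M + ‖s‖ * M ^ 2 := by
      intro n _
      refine (norm_sq_div_sq_mul_sub_le (hζ n) (norm_sub_pos_iff.1 (hε.trans_le (hs n)))).trans ?_
      gcongr
      · exact hs n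
      · exact hM n
      · exact hM n
    calc ∑ n ∈ T, ‖t n‖ ≤ T.card * (ε⁻¹ + M + ‖s‖ * M ^ 2) := by
          rw [← nsmul_eq_mul]
          exact Finset.sum_le_card_nsmul _ _ _ hterm
      _ ≤ C * (1 + ρ ^ 2) * (ε⁻¹ + M + ‖s‖ * M ^ 2) := by
          gcongr
          exact h.card_le (by linarith) T fun n => (hT n).1
  have hfar : ∀ n : ((T : Set ι)ᶜ : Set ι), ‖t n‖ ≤ 2 * ‖s‖ ^ 2 * ‖ζ n‖⁻¹ ^ 3 := fun n =>
    norm_sq_div_sq_mul_sub_le_of_two_mul_le (hsρ.trans (not_le.1 (mt (hT n).2 n.2)).le)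
  obtain ⟨hsum, htsum⟩ := h.tsum_norm_inv_pow_three_le (s := (T : Set ι)ᶜ)
    fun n hn => hρ.trans (not_le.1 (mt (hT n).2 hn)).le
  have hsumt : Summable fun n : ((T : Set ι)ᶜ : Set ι) => ‖t n‖ :=
    (hsum.mul_left _).of_nonneg_of_le (fun _ => norm_nonneg _) hfar
  rw [← (h.summable_sq_div_sq_mul_sub s).sum_add_tsum_compl (s := T)]
  calc ‖∑ n ∈ T, t n + ∑' n : ((T : Set ι)ᶜ : Set ι), t n‖
      ≤ ∑ n ∈ T, ‖t n‖ + ∑' n : ((T : Set ι)ᶜ : Set ι), ‖t n‖ :=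
        (norm_add_le _ _).trans (add_le_add (norm_sum_le _ _) (norm_tsum_le_tsum_norm hsumt))
    _ ≤ C * (1 + ρ ^ 2) * (ε⁻¹ + M + ‖s‖ * M ^ 2) +
          2 * ‖s‖ ^ 2 * ∑' n : ((T : Set ι)ᶜ : Set ι), ‖ζ n‖⁻¹ ^ 3 := by
        rw [← tsum_mul_left]
        exact add_le_add hnear (hsumt.tsum_le_tsum hfar (hsum.mul_left _))
    _ ≤ C * (1 + ρ ^ 2) * (ε⁻¹ + M + ‖s‖ * M ^ 2) + 20 * C * ‖s‖ ^ 2 := by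
        nlinarith [sq_nonneg ‖s‖]

lemma eventually_norm_weierstrassE2_div_sub_one_le (h : HasQuadraticCounting ζ C) (R : ℝ) :
    ∀ᶠ n in cofinite, ∀ w : ℂ, ‖w‖ ≤ R →
      ‖weierstrassE2 (w / ζ n) - 1‖ ≤ 2 * R ^ 3 * ‖ζ n‖⁻¹ ^ 3 := by
  filter_upwards [h.eventually_lt_norm (2 * R)] with n hn w hw
  have hR : 0 ≤ R := (norm_nonneg w).trans hw
  have hwn : ‖w / ζ n‖ ≤ R * ‖ζ n‖⁻¹ := by
    rw [norm_div, div_eq_mul_inv]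
    gcongr
  have hhalf : R * ‖ζ n‖⁻¹ ≤ 1 / 2 := by
    rw [← div_eq_mul_inv, div_le_iff₀ (by linarith)]
    linarith
  calc ‖weierstrassE2 (w / ζ n) - 1‖ ≤ 2 * ‖w / ζ n‖ ^ 3 :=
        norm_weierstrassE2_sub_one_le (hwn.trans hhalf)
    _ ≤ 2 * (R * ‖ζ n‖⁻¹) ^ 3 := by gcongr
    _ = 2 * R ^ 3 * ‖ζ n‖⁻¹ ^ 3 := by ring

lemma multipliableLocallyUniformlyOn_weierstrassE2_div (h : HasQuadraticCounting ζ C) (R : ℝ) :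
    MultipliableLocallyUniformlyOn (fun n w => weierstrassE2 (w / ζ n)) (ball 0 R) := by
  have hcont (n : ι) : ContinuousOn (fun w => weierstrassE2 (w / ζ n) - 1) (ball 0 R) :=
    ((differentiable_weierstrassE2.comp (differentiable_id.div_const _)).continuous.sub
      continuous_const).continuousOn
  have hbound : ∀ᶠ n in cofinite, ∀ w ∈ ball (0 : ℂ) R,
      ‖weierstrassE2 (w / ζ n) - 1‖ ≤ 2 * R ^ 3 * ‖ζ n‖⁻¹ ^ 3 := by
    filter_upwards [h.eventually_norm_weierstrassE2_div_sub_one_le R] with n hn w hw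
    exact hn w (mem_ball_zero_iff.1 hw).le
  simpa using (h.summable_norm_inv_pow_three.mul_left _).multipliableLocallyUniformlyOn_one_add
    isOpen_ball hbound hcont

lemma tprod_weierstrassE2_div_ne_zero (h : HasQuadraticCounting ζ C) {s : ℂ}
    (hs : ∀ n, weierstrassE2 (s / ζ n) ≠ 0) : ∏' n, weierstrassE2 (s / ζ n) ≠ 0 := by
  have hsum : Summable fun n => ‖weierstrassE2 (s / ζ n) - 1‖ :=
    (h.summable_norm_inv_pow_three.mul_left (2 * ‖s‖ ^ 3)).of_norm_bounded_eventually <| by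
      filter_upwards [h.eventually_norm_weierstrassE2_div_sub_one_le ‖s‖] with n hn
      simpa using hn s le_rfl
  simpa using tprod_one_add_ne_zero_of_summable (by simpa using hs) hsum

lemma logDeriv_tprod_weierstrassE2_div (h : HasQuadraticCounting ζ C) (hζ : ∀ n, ζ n ≠ 0)
    {s : ℂ} (hs : ∀ n, s ≠ ζ n) :
    logDeriv (fun w => ∏' n, weierstrassE2 (w / ζ n)) s =
      ∑' n, s ^ 2 / (ζ n ^ 2 * (s - ζ n)) := by
  have hne (n : ι) : weierstrassE2 (s / ζ n) ≠ 0 :=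
    weierstrassE2_ne_zero fun h1 => hs n ((div_eq_one_iff_eq (hζ n)).1 h1)
  have hlog (n : ι) := logDeriv_weierstrassE2_div (hζ n) (hs n)
  rw [logDeriv_tprod_eq_tsum (f := fun n w => weierstrassE2 (w / ζ n)) isOpen_ball
    (mem_ball_zero_iff.2 (lt_add_one ‖s‖)) hne
    (fun n => (differentiable_weierstrassE2.comp (differentiable_id.div_const _)).differentiableOn)
    ((h.summable_sq_div_sq_mul_sub s).congr fun n => (hlog n).symm)
    (h.multipliableLocallyUniformlyOn_weierstrassE2_div _) (h.tprod_weierstrassE2_div_ne_zero hne)]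
  exact tsum_congr hlog

end HasQuadraticCounting

theorem stmt7_general (ζ : ℕ → ℂ) (hζ : ∀ n, ζ n ≠ 0) (C : ℝ)
    (hcount : ∀ r : ℝ, 0 ≤ r → {n : ℕ | ‖ζ n‖ ≤ r}.Finite ∧
      ({n : ℕ | ‖ζ n‖ ≤ r}.ncard : ℝ) ≤ C * (1 + r ^ 2))
    (δ c : ℝ) (hδ : 0 < δ) (hc : 0 < c)
    (P : ℂ → ℂ)
    (hP : ∀ s : ℂ, P s = ∏' n : ℕ,
      (1 - s / ζ n) * Complex.exp (s / ζ n + s ^ 2 / (2 * ζ n ^ 2))) :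
    ∃ C' : ℝ, 0 < C' ∧ ∀ s : ℂ,
      (∀ n : ℕ, c * Real.sqrt (1 + ‖s‖ ^ 2) ^ (-2 - δ) ≤ ‖s - ζ n‖) →
      ‖deriv P s / P s‖ ≤ C' * Real.sqrt (1 + ‖s‖ ^ 2) ^ (4 + δ) := by
  have h : HasQuadraticCounting ζ C := hcount
  have hC := h.nonneg
  obtain ⟨M, hM0, hM⟩ := h.exists_norm_inv_le
  have hPE : P = fun w => ∏' n, weierstrassE2 (w / ζ n) := funext fun w => by
    simp only [hP, weierstrassE2_div]
  refine ⟨5 * C * (c⁻¹ + M + M ^ 2) + 20 * C + 1, by positivity, fun s hs => ?_⟩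
  set A := √(1 + ‖s‖ ^ 2)
  have hA1 : 1 ≤ A := Real.one_le_sqrt.2 (by nlinarith [norm_nonneg s])
  have hsA : ‖s‖ ≤ A := Real.le_sqrt_of_sq_le (by linarith)
  have hsζ (n : ℕ) : s ≠ ζ n := norm_sub_pos_iff.1 ((hs n).trans_lt' (by positivity))
  set B := A ^ (2 + δ)
  have hAB : A ≤ B := Real.self_le_rpow_of_one_le hA1 (by linarith)
  have hsep : (c * A ^ (-2 - δ))⁻¹ = c⁻¹ * B := by
    rw [mul_inv, ← Real.rpow_neg (by positivity), show -(-2 - δ) = 2 + δ by ring]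
  have hA4 : A ^ (4 + δ) = A ^ 2 * B := by
    rw [show (4 : ℝ) + δ = (2 : ℕ) + (2 + δ) by push_cast; ring,
      Real.rpow_add (by positivity), Real.rpow_natCast]
  rw [hPE, ← logDeriv_apply, h.logDeriv_tprod_weierstrassE2_div hζ hsζ, hA4]
  refine (h.norm_tsum_sq_div_sq_mul_sub_le hζ hM0 hM (by positivity) hs (ρ := 2 * A)
    (by linarith) (by linarith)).trans ?_
  rw [hsep]
  calc C * (1 + (2 * A) ^ 2) * (c⁻¹ * B + M + ‖s‖ * M ^ 2) + 20 * C * ‖s‖ ^ 2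
      ≤ C * (5 * A ^ 2) * ((c⁻¹ + M + M ^ 2) * B) + 20 * C * (A ^ 2 * B) := by
        gcongr
        · nlinarith
        · nlinarith [mul_le_mul_of_nonneg_right (hsA.trans hAB) (sq_nonneg M)]
        · exact (pow_le_pow_left₀ (norm_nonneg s) hsA 2).trans
            (le_mul_of_one_le_right (by positivity) (hA1.trans hAB))
    _ ≤ (5 * C * (c⁻¹ + M + M ^ 2) + 20 * C + 1) * (A ^ 2 * B) := by
        nlinarith [show 0 ≤ A ^ 2 * B by positivity]

/-- Under the counting bound `#{n : |ζ n| ≤ r} ≤ C(1+r²)`, with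
`P(s) = ∏ (1 − s/ζ n)·exp(s/ζ n + s²/(2 ζ n²))` and `δ, c > 0`, there is `C′ > 0` such
that every `s` with `|s − ζ n| ≥ c⟨s⟩^{−2−δ}` for all `n` (where `⟨s⟩ = (1+|s|²)^{1/2}`)
satisfies `|P′(s)/P(s)| ≤ C′⟨s⟩^{4+δ}`. -/
theorem stmt7 (ζ : ℕ → ℂ) (hζ : ∀ n, ζ n ≠ 0) (C : ℝ) (hC : 0 < C)
    (hcount : ∀ r : ℝ, 0 ≤ r → {n : ℕ | ‖ζ n‖ ≤ r}.Finite ∧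
      ({n : ℕ | ‖ζ n‖ ≤ r}.ncard : ℝ) ≤ C * (1 + r ^ 2))
    (δ c : ℝ) (hδ : 0 < δ) (hc : 0 < c)
    (P : ℂ → ℂ)
    (hP : ∀ s : ℂ, P s = ∏' n : ℕ,
      (1 - s / ζ n) * Complex.exp (s / ζ n + s ^ 2 / (2 * ζ n ^ 2))) :
    ∃ C' : ℝ, 0 < C' ∧ ∀ s : ℂ,
      (∀ n : ℕ, c * Real.sqrt (1 + ‖s‖ ^ 2) ^ (-2 - δ) ≤ ‖s - ζ n‖) →
      ‖deriv P s / P s‖ ≤ C' * Real.sqrt (1 + ‖s‖ ^ 2) ^ (4 + δ) :=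
  stmt7_general ζ hζ C hcount δ c hδ hc P hP
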